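/- Let (N,x) be the apex game with apex player a, |N| ≥ 3, let S ⊆ N with |S| ≥ 2, and let p_S, q_S be probability distributions over Π₂(S) and over the subsets of N\S. Then the decisiveness index takes the values: D^x_{p,q}(S) = q_S(N\(S∪{a})) + q_S({a}) if a ∉ S; D^x_{p,q}(S) = (q_S(∅) + q_S(N\S))·p_S({{a}, S\{a}}) if a ∈ S and S ≠ N; and D^x_{p,q}(N) = 0. -/

import Mathlib

open Finset

variable {α : Type*} [DecidableEq α]

/-- A simple monotone game on the player set `N`: `v` maps coalitions to `{0,1}`,
`v ∅ = 0`, `v N = 1`, and `v` is monotone on subsets of `N`. -/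
structure SimpleGame (N : Finset α) (v : Finset α → ℝ) : Prop where
  empty : v ∅ = 0
  full : v N = 1
  mono : ∀ ⦃S T : Finset α⦄, S ⊆ T → T ⊆ N → v S ≤ v T
  binary : ∀ S ⊆ N, v S = 0 ∨ v S = 1

/-- Block interaction indicator `BI v {S₁,S₂} T = v(S₁∪S₂∪T) − v(S₁∪T) − v(S₂∪T) + v(T)`. -/
noncomputable def BI (v : Finset α → ℝ) (π : Sym2 (Finset α)) (T : Finset α) : ℝ :=
  Sym2.lift ⟨fun A B => v (A ∪ B ∪ T) - v (A ∪ T) - v (B ∪ T) + v T,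
    fun A B => by simp only []; rw [Finset.union_comm A B]; ring⟩ π

/-- `Π₂(S)`: the set of unordered partitions of `S` into two nonempty parts. -/
def Pi2 (S : Finset α) : Finset (Sym2 (Finset α)) :=
  (S.powerset.filter fun Q => Q ≠ ∅ ∧ Q ≠ S).image fun Q => s(Q, S \ Q)

/-- `S` is critical with respect to `T`: `v(S∪T) − v(T) = 1`. -/
def Critical (v : Finset α → ℝ) (S T : Finset α) : Prop := v (S ∪ T) - v T = 1

/-- `S` is essential critical with respect to `T`: `S` is critical wrt `T` and no
proper nonempty subset of `S` is critical wrt `T`. -/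
def EssentialCritical (v : Finset α → ℝ) (S T : Finset α) : Prop :=
  Critical v S T ∧ ∀ S' : Finset α, S' ⊂ S → S'.Nonempty → ¬ Critical v S' T

/-- The attitude `A_p(S,T)` of `S` towards `T` under the distribution `p` on `Π₂(S)`. -/
noncomputable def attitude (v : Finset α → ℝ) (p : Sym2 (Finset α) → ℝ)
    (S T : Finset α) : ℝ :=
  ∑ π ∈ Pi2 S, p π * BI v π T

/-- The coopetition index `C_{p,q}(S)`. -/
noncomputable def coop (N : Finset α) (v : Finset α → ℝ)
    (p : Sym2 (Finset α) → ℝ) (q : Finset α → ℝ) (S : Finset α) : ℝ :=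
  ∑ T ∈ (N \ S).powerset, q T * attitude v p S T

/-- `Σ_S(N)`: orderings of `N` (as lists) in which the elements of `S` occupy
consecutive positions. -/
noncomputable def SigmaOrd (N S : Finset α) : Finset (List α) := by
  classical
  exact N.toList.permutations.toFinset.filter
    fun l => ∃ k ∈ Finset.range (l.length + 1), ((l.drop k).take S.card).toFinset = S

/-- Sequential attitude `AS(S,σ)` of `S` towards the ordering `l`:
the average over `k = 1, …, s−1` of the block interaction between the first `k` and the
last `s−k` elements of the block of `S` in `l`, against the predecessors of `S` in `l`. -/
noncomputable def seqAttitude (v : Finset α → ℝ) (S : Finset α) (l : List α) : ℝ :=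
  (1 / ((S.card : ℝ) - 1)) * ∑ k ∈ Finset.Icc 1 (S.card - 1),
    BI v (s((((l.dropWhile fun x => decide (x ∉ S)).take S.card).take k).toFinset,
            (((l.dropWhile fun x => decide (x ∉ S)).take S.card).drop k).toFinset))
      (l.takeWhile fun x => decide (x ∉ S)).toFinset

/-- Shapley-Owen coopetition index defined through orderings. -/
noncomputable def C_SO_ord (N : Finset α) (v : Finset α → ℝ) (S : Finset α) : ℝ :=
  (1 / ((SigmaOrd N S).card : ℝ)) * ∑ l ∈ SigmaOrd N S, seqAttitude v S l

/-- Shapley-Owen weight on partitions `{Q, S\Q}`: `2·q!·(s−q)!/((s−1)·s!)`. -/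
noncomputable def soWeight (S : Finset α) : Sym2 (Finset α) → ℝ :=
  Sym2.lift ⟨fun A B => (2 * A.card.factorial * B.card.factorial : ℝ) /
      (((S.card : ℝ) - 1) * (S.card.factorial : ℝ)),
    fun A B => by simp only []; ring⟩

/-- Shapley-Owen weight on external coalitions: `t!·(n−s−t)!/(n−s+1)!`. -/
noncomputable def soExt (N S T : Finset α) : ℝ :=
  (T.card.factorial * (N.card - S.card - T.card).factorial : ℝ) /
    ((N.card - S.card + 1).factorial : ℝ)

/-- Shapley-Owen coopetition index (closed formula). -/
noncomputable def C_SO (N : Finset α) (v : Finset α → ℝ) (S : Finset α) : ℝ :=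
  ∑ T ∈ (N \ S).powerset, soExt N S T * ∑ π ∈ Pi2 S, soWeight S π * BI v π T

/-- Banzhaf coopetition index. -/
noncomputable def C_Bz (N : Finset α) (v : Finset α → ℝ) (S : Finset α) : ℝ :=
  (1 / ((2 : ℝ) ^ (N.card - S.card) * ((2 : ℝ) ^ (S.card - 1) - 1))) *
    ∑ T ∈ (N \ S).powerset, ∑ π ∈ Pi2 S, BI v π T

/-- Decisiveness index `D_{p,q}(S)`. -/
noncomputable def decis (N : Finset α) (v : Finset α → ℝ)
    (p : Sym2 (Finset α) → ℝ) (q : Finset α → ℝ) (S : Finset α) : ℝ :=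
  ∑ T ∈ (N \ S).powerset, q T * ∑ π ∈ Pi2 S, p π * |BI v π T|

/-- Banzhaf decisiveness index. -/
noncomputable def D_Bz (N : Finset α) (v : Finset α → ℝ) (S : Finset α) : ℝ :=
  (1 / ((2 : ℝ) ^ (N.card - S.card) * ((2 : ℝ) ^ (S.card - 1) - 1))) *
    ∑ T ∈ (N \ S).powerset, ∑ π ∈ Pi2 S, |BI v π T|

/-- Shapley-Owen decisiveness index. -/
noncomputable def D_SO (N : Finset α) (v : Finset α → ℝ) (S : Finset α) : ℝ :=
  ∑ T ∈ (N \ S).powerset, soExt N S T * ∑ π ∈ Pi2 S, soWeight S π * |BI v π T|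

/-- The apex game on `N` with apex player `a`. -/
noncomputable def apexGame (N : Finset α) (a : α) : Finset α → ℝ :=
  fun S => if (a ∈ S ∧ (S \ {a}).Nonempty) ∨ S = N \ {a} then 1 else 0

/-! In the apex game the interaction `BI({S₁, S₂}, T)` of a partition of `S` with an outside
coalition `T` can be read off from which of the four coalitions contain `a` and another player.
If `a ∉ S`, it does not depend on the partition: it is `-1` when `T = {a}` (the apex alone loses,
but wins with either part) and `1` when `S ∪ T = N \ {a}` (the only winning coalition without
the apex), so `p` sums out. If `a ∈ S`, every partition in which the apex has a partner inside
`S` has zero interaction, and `{{a}, S \ {a}}` has interaction `[T = ∅] - [T = N \ S]`, which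
vanishes when `S = N`. -/

lemma mem_Pi2 {S : Finset α} {π : Sym2 (Finset α)} :
    π ∈ Pi2 S ↔ ∃ Q ⊆ S, Q.Nonempty ∧ (S \ Q).Nonempty ∧ s(Q, S \ Q) = π := by
  simp only [Pi2, mem_image, mem_filter, mem_powerset, ← nonempty_iff_ne_empty, sdiff_nonempty]
  refine exists_congr fun Q => ⟨?_, ?_⟩
  · rintro ⟨⟨hQ, hne, hQS⟩, h⟩
    exact ⟨hQ, hne, fun h' => hQS (subset_antisymm hQ h'), h⟩
  · rintro ⟨hQ, hne, hQS, h⟩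
    exact ⟨⟨hQ, hne, fun h' => hQS h'.ge⟩, h⟩

lemma exists_mem_eq_of_mem_Pi2 {S : Finset α} {π : Sym2 (Finset α)} {a : α} (ha : a ∈ S)
    (hπ : π ∈ Pi2 S) : ∃ A ⊆ S, a ∈ A ∧ s(A, S \ A) = π := by
  obtain ⟨Q, hQ, -, -, rfl⟩ := mem_Pi2.mp hπ
  by_cases haQ : a ∈ Q
  · exact ⟨Q, hQ, haQ, rfl⟩
  · refine ⟨S \ Q, sdiff_subset, mem_sdiff.mpr ⟨ha, haQ⟩, ?_⟩
    rw [Finset.sdiff_sdiff_eq_self hQ, Sym2.eq_swap]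

lemma BI_mk (v : Finset α → ℝ) (A B T : Finset α) :
    BI v s(A, B) T = v (A ∪ B ∪ T) - v (A ∪ T) - v (B ∪ T) + v T := rfl

lemma union_eq_iff_eq_sdiff {A B U : Finset α} (hAB : Disjoint A B) (hAU : A ⊆ U) :
    A ∪ B = U ↔ B = U \ A := by
  constructor
  · rintro rfl; rw [union_sdiff_cancel_left hAB]
  · rintro rfl; exact union_sdiff_of_subset hAU

lemma abs_ite_sub_ite {R : Type*} [Ring R] [LinearOrder R] [IsOrderedRing R] {P Q : Prop}
    [Decidable P] [Decidable Q] (h : ¬(P ∧ Q)) :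
    |(if P then (1 : R) else 0) - (if Q then 1 else 0)| =
      (if P then 1 else 0) + (if Q then 1 else 0) := by
  split_ifs <;> simp_all

lemma sum_mul_ite_add_ite {R ι : Type*} [NonAssocSemiring R] [DecidableEq ι] {s : Finset ι}
    (f : ι → R) {i j : ι} (hi : i ∈ s) (hj : j ∈ s) :
    ∑ k ∈ s, f k * ((if k = i then 1 else 0) + (if k = j then 1 else 0)) = f i + f j := by
  simp [mul_add, sum_add_distrib, hi, hj]

section ApexGame

variable {N S T : Finset α} {a : α}

lemma apexGame_of_mem {X : Finset α} (h : a ∈ X) :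
    apexGame N a X = if X = {a} then 0 else 1 := by
  have hXN : X ≠ N \ {a} := by rintro rfl; simp at h
  have hsub : X ⊆ {a} ↔ X = {a} := Nonempty.subset_singleton_iff ⟨a, h⟩
  simp only [apexGame, hXN, or_false, h, true_and, sdiff_nonempty, hsub]
  split_ifs <;> rfl

lemma apexGame_of_notMem {X : Finset α} (h : a ∉ X) :
    apexGame N a X = if X = N \ {a} then 1 else 0 := by
  simp [apexGame, h]

lemma apexGame_eq_one {X : Finset α} {b : α} (ha : a ∈ X) (hb : b ∈ X) (hba : b ≠ a) :
    apexGame N a X = 1 := by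
  rw [apexGame_of_mem ha, if_neg (ne_of_mem_of_not_mem' hb (by simpa using hba))]

lemma apexGame_eq_zero {X : Finset α} {c : α} (ha : a ∉ X) (hc : c ∈ N) (hca : c ≠ a)
    (hcX : c ∉ X) : apexGame N a X = 0 := by
  rw [apexGame_of_notMem ha, if_neg (ne_of_mem_of_not_mem' (by simpa [hca] using hc) hcX).symm]

variable (hS : S ⊆ N) (hT : T ⊆ N \ S)
include hS hT

lemma BI_apexGame_of_notMem (haS : a ∉ S) {Q : Finset α} (hQ : Q ⊆ S)
    (hQne : Q.Nonempty) (hSQ : (S \ Q).Nonempty) :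
    BI (apexGame N a) s(Q, S \ Q) T =
      (if T = N \ (S ∪ {a}) then 1 else 0) - (if T = {a} then 1 else 0) := by
  obtain ⟨b, hbQ⟩ := hQne
  obtain ⟨c, hc⟩ := hSQ
  have hbS := hQ hbQ
  have hba : b ≠ a := by rintro rfl; exact haS hbS
  have hca : c ≠ a := by rintro rfl; exact haS (mem_sdiff.mp hc).1
  have hdisj : Disjoint S T := disjoint_of_subset_right hT disjoint_sdiff
  rw [BI_mk, union_sdiff_of_subset hQ]
  by_cases haT : a ∈ T
  · have hTne : T ≠ N \ (S ∪ {a}) := ne_of_mem_of_not_mem' haT (by simp)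
    rw [apexGame_eq_one (mem_union_right _ haT) (mem_union_left _ hbS) hba,
      apexGame_eq_one (mem_union_right _ haT) (mem_union_left _ hbQ) hba,
      apexGame_eq_one (mem_union_right _ haT) (mem_union_left _ hc) hca,
      apexGame_of_mem haT, if_neg hTne]
    split_ifs <;> norm_num
  · have hST : S ∪ T = N \ {a} ↔ T = N \ (S ∪ {a}) := by
      rw [union_eq_iff_eq_sdiff hdisj (by simpa [subset_sdiff] using ⟨hS, haS⟩),
        sdiff_sdiff_left, sup_eq_union, union_comm]
    have hcT : c ∉ T := disjoint_left.mp hdisj (mem_sdiff.mp hc).1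
    rw [apexGame_of_notMem (by simp [haS, haT]),
      apexGame_eq_zero (X := Q ∪ T) (by simp [haT]; exact fun h => haS (hQ h))
        (hS (mem_sdiff.mp hc).1) hca (by simp [(mem_sdiff.mp hc).2, hcT]),
      apexGame_eq_zero (X := S \ Q ∪ T) (by simp [haT, haS]) (hS hbS) hba
        (by simp [hbQ, disjoint_left.mp hdisj hbS]),
      apexGame_eq_zero haT (hS (mem_sdiff.mp hc).1) hca hcT,
      if_neg (ne_of_mem_of_not_mem' (mem_singleton_self a) haT).symm]
    simp only [hST]
    ring

lemma BI_apexGame_of_mem_of_ne_singleton {A : Finset α} (hA : A ⊆ S) (haA : a ∈ A)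
    (hAa : A ≠ {a}) : BI (apexGame N a) s(A, S \ A) T = 0 := by
  obtain ⟨c, hcA, hca⟩ := ((nontrivial_iff_ne_singleton haA).mpr hAa).exists_ne a
  have hcS := hA hcA
  have hcT : c ∉ T := fun h => (mem_sdiff.mp (hT h)).2 hcS
  have haT : a ∉ T := fun h => (mem_sdiff.mp (hT h)).2 (hA haA)
  rw [BI_mk, union_sdiff_of_subset hA,
    apexGame_eq_one (mem_union_left _ (hA haA)) (mem_union_left _ hcS) hca,
    apexGame_eq_one (mem_union_left _ haA) (mem_union_left _ hcA) hca,
    apexGame_eq_zero (X := S \ A ∪ T) (by simp [haA, haT]) (hS hcS) hca (by simp [hcA, hcT]),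
    apexGame_eq_zero haT (hS hcS) hca hcT]
  ring

lemma BI_apexGame_singleton (haS : a ∈ S) (hSa : S ≠ {a}) :
    BI (apexGame N a) s({a}, S \ {a}) T =
      (if T = ∅ then 1 else 0) - (if T = N \ S then 1 else 0) := by
  obtain ⟨b, hbS, hba⟩ := ((nontrivial_iff_ne_singleton haS).mpr hSa).exists_ne a
  have hbT : b ∉ T := fun h => (mem_sdiff.mp (hT h)).2 hbS
  have haT : a ∉ T := fun h => (mem_sdiff.mp (hT h)).2 haS
  have haT' : {a} ∪ T = {a} ↔ T = ∅ := by
    rw [union_eq_left, subset_singleton_iff,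
      or_iff_left (ne_of_mem_of_not_mem' (mem_singleton_self a) haT).symm]
  have hST : S \ {a} ∪ T = N \ {a} ↔ T = N \ S := by
    rw [union_eq_iff_eq_sdiff (disjoint_of_subset_left sdiff_subset
      (disjoint_of_subset_right hT disjoint_sdiff)) (sdiff_subset_sdiff hS subset_rfl),
      sdiff_sdiff_sdiff_cancel_right (singleton_subset_iff.mpr haS)]
  rw [BI_mk, union_sdiff_of_subset (singleton_subset_iff.mpr haS),
    apexGame_eq_one (mem_union_left _ haS) (mem_union_left _ hbS) hba,
    apexGame_of_mem (mem_union_left _ (mem_singleton_self a)),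
    apexGame_of_notMem (by simp [haT]), apexGame_eq_zero haT (hS hbS) hba hbT]
  simp only [haT', hST]
  split_ifs <;> ring

lemma sum_Pi2_abs_BI_apexGame_of_notMem (haS : a ∉ S) {p : Sym2 (Finset α) → ℝ}
    (hp1 : ∑ π ∈ Pi2 S, p π = 1) :
    ∑ π ∈ Pi2 S, p π * |BI (apexGame N a) π T| =
      |(if T = N \ (S ∪ {a}) then 1 else 0) - (if T = {a} then 1 else 0)| := by
  calc ∑ π ∈ Pi2 S, p π * |BI (apexGame N a) π T|
      = ∑ π ∈ Pi2 S,
          p π * |(if T = N \ (S ∪ {a}) then 1 else 0) - (if T = {a} then 1 else 0)| := by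
        refine sum_congr rfl fun π hπ => ?_
        obtain ⟨Q, hQ, hQne, hSQ, rfl⟩ := mem_Pi2.mp hπ
        rw [BI_apexGame_of_notMem hS hT haS hQ hQne hSQ]
    _ = _ := by rw [← sum_mul, hp1, one_mul]

lemma sum_Pi2_abs_BI_apexGame_of_mem (haS : a ∈ S) (hSa : S ≠ {a})
    (p : Sym2 (Finset α) → ℝ) :
    ∑ π ∈ Pi2 S, p π * |BI (apexGame N a) π T| =
      p s({a}, S \ {a}) * |(if T = ∅ then 1 else 0) - (if T = N \ S then 1 else 0)| := by
  have hSa' : (S \ {a}).Nonempty :=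
    sdiff_nonempty.mpr ((nontrivial_iff_ne_singleton haS).mpr hSa).not_subset_singleton
  have hπ₀ : s({a}, S \ {a}) ∈ Pi2 S :=
    mem_Pi2.mpr ⟨{a}, singleton_subset_iff.mpr haS, singleton_nonempty a, hSa', rfl⟩
  rw [sum_eq_single_of_mem _ hπ₀, BI_apexGame_singleton hS hT haS hSa]
  intro π hπ hne
  obtain ⟨A, hA, haA, rfl⟩ := exists_mem_eq_of_mem_Pi2 haS hπ
  rw [BI_apexGame_of_mem_of_ne_singleton hS hT hA haA (by rintro rfl; exact hne rfl),
    abs_zero, mul_zero]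

end ApexGame

theorem statement16_general (N : Finset α) (a : α) (ha : a ∈ N)
    (S : Finset α) (hS : S ⊆ N) (hs : 2 ≤ S.card)
    (p : Sym2 (Finset α) → ℝ) (q : Finset α → ℝ)
    (hp1 : ∑ π ∈ Pi2 S, p π = 1) :
    (a ∉ S → decis N (apexGame N a) p q S = q (N \ (S ∪ {a})) + q {a}) ∧
    (a ∈ S → S ≠ N →
      decis N (apexGame N a) p q S = (q ∅ + q (N \ S)) * p (s({a}, S \ {a}))) ∧
    (S = N → decis N (apexGame N a) p q S = 0) := by
  have hSa : S ≠ {a} := by rintro rfl; simp at hs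
  refine ⟨fun haS => ?_, fun haS hSN => ?_, fun hSN => ?_⟩
  · have hU : N \ (S ∪ {a}) ∈ (N \ S).powerset :=
      mem_powerset.mpr (sdiff_subset_sdiff subset_rfl subset_union_left)
    have hV : {a} ∈ (N \ S).powerset := by simpa using ⟨ha, haS⟩
    rw [decis, ← sum_mul_ite_add_ite q hU hV]
    refine sum_congr rfl fun T hT => ?_
    rw [sum_Pi2_abs_BI_apexGame_of_notMem hS (mem_powerset.mp hT) haS hp1, abs_ite_sub_ite]
    rintro ⟨rfl, h⟩
    simpa using h.ge
  · have hNS : (N \ S).Nonempty := sdiff_nonempty.mpr fun h => hSN (subset_antisymm hS h)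
    rw [decis, ← sum_mul_ite_add_ite q (empty_mem_powerset _) (mem_powerset_self _), sum_mul]
    refine sum_congr rfl fun T hT => ?_
    rw [sum_Pi2_abs_BI_apexGame_of_mem hS (mem_powerset.mp hT) haS hSa, abs_ite_sub_ite]
    · ring
    rintro ⟨rfl, h⟩
    exact hNS.ne_empty h.symm
  · subst hSN
    rw [decis, sdiff_self, bot_eq_empty, powerset_empty, sum_singleton,
      sum_Pi2_abs_BI_apexGame_of_mem subset_rfl (empty_subset _) ha hSa]
    simp

/-- values of the decisiveness index in the apex game. -/
theorem statement16 (N : Finset α) (a : α) (ha : a ∈ N) (hn : 3 ≤ N.card)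
    (S : Finset α) (hS : S ⊆ N) (hs : 2 ≤ S.card)
    (p : Sym2 (Finset α) → ℝ) (q : Finset α → ℝ)
    (hp0 : ∀ π ∈ Pi2 S, 0 ≤ p π) (hp1 : ∑ π ∈ Pi2 S, p π = 1)
    (hq0 : ∀ T ∈ (N \ S).powerset, 0 ≤ q T) (hq1 : ∑ T ∈ (N \ S).powerset, q T = 1) :
    (a ∉ S → decis N (apexGame N a) p q S = q (N \ (S ∪ {a})) + q {a}) ∧
    (a ∈ S → S ≠ N →
      decis N (apexGame N a) p q S = (q ∅ + q (N \ S)) * p (s({a}, S \ {a}))) ∧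
    (S = N → decis N (apexGame N a) p q S = 0) :=
  statement16_general N a ha S hS hs p q hp1
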